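/- The variety Y ⊂ P^5 defined by the ideal (t_0 t_5 − t_1 t_4, t_2 t_5 − t_3 t_4, t_1 t_2 − t_0 t_3) is the Zariski closure of the image of the rational map ζ: (P^1)^3 ⇢ P^5 given by (x_0 y_0 z_1 : x_1 y_0 z_1 : x_0 y_1 z_1 : x_1 y_1 z_1 : x_0 y_1 z_0 : x_1 y_1 z_0), it is a threefold of degree 3 in P^5 (hence a variety of minimal degree), and ζ is birational onto Y. -/

import Mathlib

noncomputable section
open MvPolynomial

/-- The trigraded ring R = ℂ[x₀,x₁,y₀,y₁,z₀,z₁]. -/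
abbrev R : Type := MvPolynomial (Fin 6) ℂ

/-- Weights giving the ℤ³-trigrading of R. -/
def triWeight : Fin 6 → Fin 3 → ℕ :=
  ![![1,0,0], ![1,0,0], ![0,1,0], ![0,1,0], ![0,0,1], ![0,0,1]]

def x0 : R := X 0
def x1 : R := X 1
def y0 : R := X 2
def y1 : R := X 3
def z0 : R := X 4
def z1 : R := X 5

/-!
STATEMENT 17: The variety Y ⊂ ℙ⁵ defined by
(t₀t₅ − t₁t₄, t₂t₅ − t₃t₄, t₁t₂ − t₀t₃) is the Zariski closure of the image of
ζ : (ℙ¹)³ ⇢ ℙ⁵, (x₀y₀z₁ : x₁y₀z₁ : x₀y₁z₁ : x₁y₁z₁ : x₀y₁z₀ : x₁y₁z₀); it is a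
threefold of degree 3 in ℙ⁵ (hence a variety of minimal degree, being
nondegenerate with deg = 1 + codim = 1 + 2), and ζ is birational onto Y.

Encodings: (i) the homogeneous ideal of the closure of the image, i.e. the
kernel of tᵢ ↦ ζᵢ, equals the span of the three quadrics; (ii) "threefold of
degree 3": the Hilbert function of the homogeneous coordinate ring is
HF(d) = (d+1)²(d+2)/2, a polynomial of degree 3 with leading coefficient 3/3!,
so dim Y = 3 and deg Y = 3 = 1 + (5 − 3); (iii) birationality onto Y via the
existence of a rational inverse given by pairs of homogeneous forms.
-/

/-- The entries of ζ. -/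
def ζ : Fin 6 → R :=
  ![x0 * y0 * z1, x1 * y0 * z1, x0 * y1 * z1, x1 * y1 * z1, x0 * y1 * z0, x1 * y1 * z0]

/-- The corresponding ℂ-algebra map ℂ[t₀,…,t₅] → R. -/
def ψ : MvPolynomial (Fin 6) ℂ →ₐ[ℂ] R := MvPolynomial.aeval ζ

namespace Scroll
def e (i : Fin 6) : Fin 6 →₀ ℕ := Finsupp.single i 1
def V : Fin 6 → (Fin 6 →₀ ℕ) :=
  ![e 0 + e 2 + e 5, e 1 + e 2 + e 5, e 0 + e 3 + e 5,
    e 1 + e 3 + e 5, e 0 + e 3 + e 4, e 1 + e 3 + e 4]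

lemma V0 : V 0 = e 0 + e 2 + e 5 := rfl
lemma V1 : V 1 = e 1 + e 2 + e 5 := rfl
lemma V2 : V 2 = e 0 + e 3 + e 5 := rfl
lemma V3 : V 3 = e 1 + e 3 + e 5 := rfl
lemma V4 : V 4 = e 0 + e 3 + e 4 := rfl
lemma V5 : V 5 = e 1 + e 3 + e 4 := rfl

lemma X_eq (a : Fin 6) : (X a : R) = monomial (e a) 1 := rfl

lemma XXX (a b c : Fin 6) : (X a : R) * X b * X c = monomial (e a + e b + e c) 1 := by
  rw [X_eq, X_eq, X_eq, monomial_mul, monomial_mul, one_mul, one_mul]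

lemma zeta_eq (i : Fin 6) : ζ i = monomial (V i) 1 := by
  fin_cases i
  · exact XXX 0 2 5
  · exact XXX 1 2 5
  · exact XXX 0 3 5
  · exact XXX 1 3 5
  · exact XXX 0 3 4
  · exact XXX 1 3 4

def Φ (m : Fin 6 →₀ ℕ) : Fin 6 →₀ ℕ := ∑ i : Fin 6, m i • V i

lemma Φ_apply (m : Fin 6 →₀ ℕ) (j : Fin 6) :
    Φ m j = m 0 * V 0 j + m 1 * V 1 j + m 2 * V 2 j + m 3 * V 3 j
      + m 4 * V 4 j + m 5 * V 5 j := by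
  simp [Φ, Fin.sum_univ_six]

lemma Φ0 (m : Fin 6 →₀ ℕ) : Φ m 0 = m 0 + m 2 + m 4 := by
  simp [Φ_apply, V0, V1, V2, V3, V4, V5, e, Finsupp.single_apply]
lemma Φ1 (m : Fin 6 →₀ ℕ) : Φ m 1 = m 1 + m 3 + m 5 := by
  simp [Φ_apply, V0, V1, V2, V3, V4, V5, e, Finsupp.single_apply]
lemma Φ2 (m : Fin 6 →₀ ℕ) : Φ m 2 = m 0 + m 1 := by
  simp [Φ_apply, V0, V1, V2, V3, V4, V5, e, Finsupp.single_apply]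
lemma Φ3 (m : Fin 6 →₀ ℕ) : Φ m 3 = m 2 + m 3 + m 4 + m 5 := by
  simp [Φ_apply, V0, V1, V2, V3, V4, V5, e, Finsupp.single_apply]
lemma Φ4 (m : Fin 6 →₀ ℕ) : Φ m 4 = m 4 + m 5 := by
  simp [Φ_apply, V0, V1, V2, V3, V4, V5, e, Finsupp.single_apply]
lemma Φ5 (m : Fin 6 →₀ ℕ) : Φ m 5 = m 0 + m 1 + m 2 + m 3 := by
  simp [Φ_apply, V0, V1, V2, V3, V4, V5, e, Finsupp.single_apply]

lemma prod_monomial {ι : Type*} (s : Finset ι) (g : ι → (Fin 6 →₀ ℕ)) :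
    (∏ i ∈ s, (monomial (g i) (1:ℂ) : R)) = monomial (∑ i ∈ s, g i) 1 := by
  induction s using Finset.cons_induction with
  | empty => simp
  | cons a s ha ih => rw [Finset.prod_cons, Finset.sum_cons, ih, monomial_mul, one_mul]

lemma psi_monomial (m : Fin 6 →₀ ℕ) :
    ψ (monomial m 1) = monomial (Φ m) 1 := by
  show aeval ζ (monomial m 1) = _
  have h1 : ∀ i ∈ m.support, ζ i ^ m i = monomial (m i • V i) (1:ℂ) := fun i _ => by
    rw [zeta_eq, monomial_pow, one_pow]
  rw [aeval_monomial, map_one, one_mul, Finsupp.prod, Finset.prod_congr rfl h1, prod_monomial]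
  have h2 : (∑ i ∈ m.support, m i • V i) = Φ m :=
    Finset.sum_subset (Finset.subset_univ _)
      (fun i _ hi => by rw [Finsupp.notMem_support_iff.mp hi, zero_smul])
  rw [h2]


lemma deg6 (m : Fin 6 →₀ ℕ) : m.degree = m 0 + m 1 + m 2 + m 3 + m 4 + m 5 := by
  have h : m.degree = ∑ i : Fin 6, m i :=
    Finset.sum_subset (Finset.subset_univ _) (fun i _ hi => Finsupp.notMem_support_iff.mp hi)
  rw [h, Fin.sum_univ_six]

def I : Ideal (MvPolynomial (Fin 6) ℂ) :=
  Ideal.span {(X 0 : MvPolynomial (Fin 6) ℂ) * X 5 - X 1 * X 4,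
    (X 2 : MvPolynomial (Fin 6) ℂ) * X 5 - X 3 * X 4,
    (X 1 : MvPolynomial (Fin 6) ℂ) * X 2 - X 0 * X 3}

lemma Q1_mem : (X 0 : MvPolynomial (Fin 6) ℂ) * X 5 - X 1 * X 4 ∈ I :=
  Ideal.subset_span (by simp)
lemma Q2_mem : (X 2 : MvPolynomial (Fin 6) ℂ) * X 5 - X 3 * X 4 ∈ I :=
  Ideal.subset_span (by simp)
lemma Q3_mem : (X 1 : MvPolynomial (Fin 6) ℂ) * X 2 - X 0 * X 3 ∈ I :=
  Ideal.subset_span (by simp)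

lemma psi_Q1 : ψ ((X 0 : MvPolynomial (Fin 6) ℂ) * X 5 - X 1 * X 4) = 0 := by
  show aeval ζ _ = 0
  simp only [map_sub, map_mul, aeval_X]
  show x0*y0*z1 * (x1*y1*z0) - x1*y0*z1 * (x0*y1*z0) = 0
  ring

lemma psi_Q2 : ψ ((X 2 : MvPolynomial (Fin 6) ℂ) * X 5 - X 3 * X 4) = 0 := by
  show aeval ζ _ = 0
  simp only [map_sub, map_mul, aeval_X]
  show x0*y1*z1 * (x1*y1*z0) - x1*y1*z1 * (x0*y1*z0) = 0
  ring

lemma psi_Q3 : ψ ((X 1 : MvPolynomial (Fin 6) ℂ) * X 2 - X 0 * X 3) = 0 := by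
  show aeval ζ _ = 0
  simp only [map_sub, map_mul, aeval_X]
  show x1*y0*z1 * (x0*y1*z1) - x0*y0*z1 * (x1*y1*z1) = 0
  ring

lemma I_le_ker : I ≤ RingHom.ker ψ.toRingHom := by
  rw [I, Ideal.span_le]
  rintro q (rfl | rfl | rfl)
  · exact psi_Q1
  · exact psi_Q2
  · exact psi_Q3

lemma step_mem (u : Fin 6 →₀ ℕ) {i j i' j' : Fin 6} (hij : i ≠ j)
    (hq : (X i * X j - X i' * X j' : MvPolynomial (Fin 6) ℂ) ∈ I)
    (hi : u i ≠ 0) (hj : u j ≠ 0) :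
    (monomial u 1 : MvPolynomial (Fin 6) ℂ)
      - monomial (u - e i - e j + e i' + e j') 1 ∈ I := by
  have hu : u = (u - e i - e j) + (e i + e j) := by
    ext k
    simp only [Finsupp.add_apply, Finsupp.tsub_apply]
    have h1 : e i k + e j k ≤ u k := by
      simp only [e, Finsupp.single_apply]
      split_ifs with hik hjk hjk'
      · exact absurd (hik.trans hjk.symm) hij
      · subst hik; omega
      · subst hjk'; omega
      · omega
    omega
  have key1 : (monomial u 1 : MvPolynomial (Fin 6) ℂ)
      = monomial (u - e i - e j) 1 * (X i * X j) := by
    rw [X_eq, X_eq, monomial_mul, one_mul, monomial_mul, one_mul, ← hu]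
  have key2 : (monomial (u - e i - e j + e i' + e j') 1 : MvPolynomial (Fin 6) ℂ)
      = monomial (u - e i - e j) 1 * (X i' * X j') := by
    rw [X_eq, X_eq, monomial_mul, one_mul, monomial_mul, one_mul, ← add_assoc]
  rw [key1, key2, ← mul_sub]
  exact Ideal.mul_mem_left _ _ hq

def W (m : Fin 6 →₀ ℕ) : ℕ := m 1 + 2 * m 2 + m 4 + 10 * m 5

def Nor (m : Fin 6 →₀ ℕ) : Prop :=
  (m 0 = 0 ∨ m 5 = 0) ∧ (m 2 = 0 ∨ m 5 = 0) ∧ (m 1 = 0 ∨ m 2 = 0)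

def NSpan : Submodule ℂ (MvPolynomial (Fin 6) ℂ) :=
  Submodule.span ℂ ((fun u => (monomial u (1:ℂ) : MvPolynomial (Fin 6) ℂ)) '' {u | Nor u})

lemma monomial_mem_sup (u : Fin 6 →₀ ℕ) :
    (monomial u 1 : MvPolynomial (Fin 6) ℂ) ∈ NSpan ⊔ I.restrictScalars ℂ := by
  suffices H : ∀ n u_1, W u_1 = n →
      (monomial u_1 1 : MvPolynomial (Fin 6) ℂ) ∈ NSpan ⊔ I.restrictScalars ℂ from
    H _ u rfl
  intro n
  induction n using Nat.strong_induction_on with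
  | _ n ih =>
  intro u hn
  by_cases h : Nor u
  · exact Submodule.mem_sup_left (Submodule.subset_span ⟨u, h, rfl⟩)
  · have hcase : (u 0 ≠ 0 ∧ u 5 ≠ 0) ∨ (u 2 ≠ 0 ∧ u 5 ≠ 0) ∨ (u 1 ≠ 0 ∧ u 2 ≠ 0) := by
      unfold Nor at h; tauto
    have key : ∀ (i j i' j' : Fin 6), i ≠ j →
        (X i * X j - X i' * X j' : MvPolynomial (Fin 6) ℂ) ∈ I →
        u i ≠ 0 → u j ≠ 0 → W (u - e i - e j + e i' + e j') < n →
        (monomial u 1 : MvPolynomial (Fin 6) ℂ) ∈ NSpan ⊔ I.restrictScalars ℂ := by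
      intro i j i' j' hij hq hi hj hw
      have h1 := ih _ hw (u - e i - e j + e i' + e j') rfl
      have h2 : (monomial u 1 : MvPolynomial (Fin 6) ℂ)
          - monomial (u - e i - e j + e i' + e j') 1 ∈ I.restrictScalars ℂ :=
        step_mem u hij hq hi hj
      have h3 := Submodule.add_mem _ h1 (Submodule.mem_sup_right h2)
      simpa using h3
    rcases hcase with ⟨h1, h2⟩ | ⟨h1, h2⟩ | ⟨h1, h2⟩
    · refine key 0 5 1 4 (by decide) Q1_mem h1 h2 ?_
      have e1 : ∀ k : Fin 6, (u - e 0 - e 5 + e 1 + e 4) k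
          = u k - e 0 k - e 5 k + e 1 k + e 4 k := fun k => by
        simp [Finsupp.add_apply, Finsupp.tsub_apply]
      unfold W at hn ⊢
      rw [e1 1, e1 2, e1 4, e1 5]
      simp [e, Finsupp.single_apply]
      omega
    · refine key 2 5 3 4 (by decide) Q2_mem h1 h2 ?_
      have e1 : ∀ k : Fin 6, (u - e 2 - e 5 + e 3 + e 4) k
          = u k - e 2 k - e 5 k + e 3 k + e 4 k := fun k => by
        simp [Finsupp.add_apply, Finsupp.tsub_apply]
      unfold W at hn ⊢
      rw [e1 1, e1 2, e1 4, e1 5]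
      simp [e, Finsupp.single_apply]
      omega
    · refine key 1 2 0 3 (by decide) Q3_mem h1 h2 ?_
      have e1 : ∀ k : Fin 6, (u - e 1 - e 2 + e 0 + e 3) k
          = u k - e 1 k - e 2 k + e 0 k + e 3 k := fun k => by
        simp [Finsupp.add_apply, Finsupp.tsub_apply]
      unfold W at hn ⊢
      rw [e1 1, e1 2, e1 4, e1 5]
      simp [e, Finsupp.single_apply]
      omega

lemma mem_sup_top (f : MvPolynomial (Fin 6) ℂ) : f ∈ NSpan ⊔ I.restrictScalars ℂ := by
  induction f using MvPolynomial.induction_on' with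
  | monomial u a =>
      have h : (monomial u a : MvPolynomial (Fin 6) ℂ) = a • monomial u 1 := by
        rw [smul_monomial, smul_eq_mul, mul_one]
      rw [h]
      exact Submodule.smul_mem _ a (monomial_mem_sup u)
  | add p q hp hq => exact Submodule.add_mem _ hp hq

lemma phi_inj_nor {m m' : Fin 6 →₀ ℕ} (hm : Nor m) (hm' : Nor m') (h : Φ m = Φ m') :
    m = m' := by
  have h0 : Φ m 0 = Φ m' 0 := by rw [h]
  have h1 : Φ m 1 = Φ m' 1 := by rw [h]
  have h2 : Φ m 2 = Φ m' 2 := by rw [h]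
  have h3 : Φ m 3 = Φ m' 3 := by rw [h]
  have h4 : Φ m 4 = Φ m' 4 := by rw [h]
  have h5 : Φ m 5 = Φ m' 5 := by rw [h]
  rw [Φ0 m, Φ0 m'] at h0
  rw [Φ1 m, Φ1 m'] at h1
  rw [Φ2 m, Φ2 m'] at h2
  rw [Φ3 m, Φ3 m'] at h3
  rw [Φ4 m, Φ4 m'] at h4
  rw [Φ5 m, Φ5 m'] at h5
  obtain ⟨ha, hb, hc⟩ := hm
  obtain ⟨ha', hb', hc'⟩ := hm'
  refine Finsupp.ext fun k => ?_
  fin_cases k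
  · show m 0 = m' 0; omega
  · show m 1 = m' 1; omega
  · show m 2 = m' 2; omega
  · show m 3 = m' 3; omega
  · show m 4 = m' 4; omega
  · show m 5 = m' 5; omega

lemma li_nor : LinearIndependent ℂ
    (fun i : {u : Fin 6 →₀ ℕ // Nor u} => (monomial (Φ i.1) (1:ℂ) : R)) := by
  have heq : (fun i : {u : Fin 6 →₀ ℕ // Nor u} => (monomial (Φ i.1) (1:ℂ) : R))
      = (basisMonomials (Fin 6) ℂ) ∘ (fun i : {u : Fin 6 →₀ ℕ // Nor u} => Φ i.1) := by
    funext i; simp [coe_basisMonomials]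
  rw [heq]
  exact (basisMonomials (Fin 6) ℂ).linearIndependent.comp _
    (fun a b hab => Subtype.ext (phi_inj_nor a.2 b.2 hab))

lemma ker_le_I : RingHom.ker ψ.toRingHom ≤ I := by
  intro f hf
  have hf' : ψ f = 0 := hf
  obtain ⟨g, hg, h, hh, rfl⟩ := Submodule.mem_sup.mp (mem_sup_top f)
  have hhI : h ∈ I := hh
  have hpsih : ψ h = 0 := I_le_ker hhI
  have hpsig : ψ g = 0 := by
    have := hf'
    rw [map_add, hpsih, add_zero] at this
    exact this
  -- g is in the span of normal monomials
  rw [NSpan, Set.image_eq_range] at hg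
  obtain ⟨c, hc⟩ := Finsupp.mem_span_range_iff_exists_finsupp.mp hg
  have hpsisum : ψ g = c.sum fun i a => a • (monomial (Φ i.1) (1:ℂ) : R) := by
    rw [← hc, map_finsuppSum]
    refine Finsupp.sum_congr fun i _ => ?_
    rw [map_smul, psi_monomial]
  have hc0 : c = 0 := by
    have hli := linearIndependent_iff.mp li_nor c
    rw [Finsupp.linearCombination_apply] at hli
    exact hli (hpsisum.symm.trans hpsig)
  have hg0 : g = 0 := by rw [← hc, hc0, Finsupp.sum_zero_index]
  rw [hg0, zero_add]
  exact hhI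

lemma part_i : RingHom.ker ψ.toRingHom = I := le_antisymm ker_le_I I_le_ker



open Finset in
def Eset (d : ℕ) : Finset (ℕ × ℕ) :=
  ((range (d+1)) ×ˢ (range (d+1))).filter (fun q => q.1 + q.2 ≤ d)

open Finset in
def Dset (d : ℕ) : Finset (ℕ × ℕ × ℕ) :=
  ((range (d+1)) ×ˢ (range (d+1)) ×ˢ (range (d+1))).filter (fun p => p.2.1 + p.2.2 ≤ d)

lemma mem_Dset {d : ℕ} {p : ℕ × ℕ × ℕ} :
    p ∈ Dset d ↔ p.1 ≤ d ∧ p.2.1 ≤ d ∧ p.2.2 ≤ d ∧ p.2.1 + p.2.2 ≤ d := by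
  simp [Dset, Finset.mem_filter, Finset.mem_product, Nat.lt_succ_iff]
  tauto

def gv (d : ℕ) (p : ℕ × ℕ × ℕ) : Fin 6 →₀ ℕ :=
  Finsupp.equivFunOnFinite.symm ![p.1, d - p.1, p.2.1, d - p.2.1, p.2.2, d - p.2.2]

lemma gv0 (d p) : gv d p 0 = p.1 := rfl
lemma gv1 (d p) : gv d p 1 = d - p.1 := rfl
lemma gv2 (d p) : gv d p 2 = p.2.1 := rfl
lemma gv3 (d p) : gv d p 3 = d - p.2.1 := rfl
lemma gv4 (d p) : gv d p 4 = p.2.2 := rfl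
lemma gv5 (d p) : gv d p 5 = d - p.2.2 := rfl

def Tset (d : ℕ) : Finset (Fin 6 →₀ ℕ) := (Dset d).image (gv d)

lemma phi_mem {d : ℕ} {u : Fin 6 →₀ ℕ} (hu : u.degree = d) : Φ u ∈ Tset d := by
  rw [deg6] at hu
  rw [Tset, Finset.mem_image]
  refine ⟨(u 0 + u 2 + u 4, u 0 + u 1, u 4 + u 5), mem_Dset.mpr (by dsimp only; omega), ?_⟩
  refine Finsupp.ext fun k => ?_
  fin_cases k
  · show gv d _ 0 = Φ u 0; rw [gv0, Φ0]
  · show gv d _ 1 = Φ u 1; rw [gv1, Φ1]; show d - (u 0 + u 2 + u 4) = _; omega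
  · show gv d _ 2 = Φ u 2; rw [gv2, Φ2]
  · show gv d _ 3 = Φ u 3; rw [gv3, Φ3]; show d - (u 0 + u 1) = _; omega
  · show gv d _ 4 = Φ u 4; rw [gv4, Φ4]
  · show gv d _ 5 = Φ u 5; rw [gv5, Φ5]; show d - (u 4 + u 5) = _; omega

def mpre (d : ℕ) (p : ℕ × ℕ × ℕ) : Fin 6 →₀ ℕ :=
  Finsupp.equivFunOnFinite.symm ![min p.1 p.2.1, p.2.1 - p.1, p.1 - p.2.1 - p.2.2,
    d - max p.1 (p.2.1 + p.2.2), min (p.1 - p.2.1) p.2.2, p.2.2 - (p.1 - p.2.1)]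

lemma mpre0 (d p) : mpre d p 0 = min p.1 p.2.1 := rfl
lemma mpre1 (d p) : mpre d p 1 = p.2.1 - p.1 := rfl
lemma mpre2 (d p) : mpre d p 2 = p.1 - p.2.1 - p.2.2 := rfl
lemma mpre3 (d p) : mpre d p 3 = d - max p.1 (p.2.1 + p.2.2) := rfl
lemma mpre4 (d p) : mpre d p 4 = min (p.1 - p.2.1) p.2.2 := rfl
lemma mpre5 (d p) : mpre d p 5 = p.2.2 - (p.1 - p.2.1) := rfl

lemma mpre_deg {d : ℕ} {p : ℕ × ℕ × ℕ} (hp : p ∈ Dset d) : (mpre d p).degree = d := by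
  obtain ⟨h1, h2, h3, h4⟩ := mem_Dset.mp hp
  rw [deg6, mpre0, mpre1, mpre2, mpre3, mpre4, mpre5]
  omega

lemma phi_mpre {d : ℕ} {p : ℕ × ℕ × ℕ} (hp : p ∈ Dset d) : Φ (mpre d p) = gv d p := by
  obtain ⟨h1, h2, h3, h4⟩ := mem_Dset.mp hp
  refine Finsupp.ext fun k => ?_
  fin_cases k
  · show Φ _ 0 = gv d p 0
    rw [Φ0, gv0, mpre0, mpre2, mpre4]; omega
  · show Φ _ 1 = gv d p 1
    rw [Φ1, gv1, mpre1, mpre3, mpre5]; omega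
  · show Φ _ 2 = gv d p 2
    rw [Φ2, gv2, mpre0, mpre1]; omega
  · show Φ _ 3 = gv d p 3
    rw [Φ3, gv3, mpre2, mpre3, mpre4, mpre5]; omega
  · show Φ _ 4 = gv d p 4
    rw [Φ4, gv4, mpre4, mpre5]; omega
  · show Φ _ 5 = gv d p 5
    rw [Φ5, gv5, mpre0, mpre1, mpre2, mpre3]; omega

lemma Md_eq (d : ℕ) :
    Submodule.map ψ.toLinearMap (homogeneousSubmodule (Fin 6) ℂ d)
      = Submodule.span ℂ ((fun v => (monomial v (1:ℂ) : R)) '' (Tset d : Set (Fin 6 →₀ ℕ))) := by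
  apply le_antisymm
  · rintro _ ⟨f, hf, rfl⟩
    simp only [SetLike.mem_coe, mem_homogeneousSubmodule] at hf
    have hrw : ψ.toLinearMap f = ∑ u ∈ f.support, coeff u f • (monomial (Φ u) (1:ℂ) : R) := by
      conv_lhs => rw [show f = ∑ u ∈ f.support, monomial u (coeff u f) from f.as_sum]
      rw [map_sum]
      refine Finset.sum_congr rfl fun u hu => ?_
      have h1 : (monomial u (coeff u f) : MvPolynomial (Fin 6) ℂ) = coeff u f • monomial u 1 := by
        rw [smul_monomial, smul_eq_mul, mul_one]
      rw [h1, map_smul, show ψ.toLinearMap (monomial u 1) = ψ (monomial u 1) from rfl,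
        psi_monomial]
    rw [hrw]
    refine Submodule.sum_mem _ fun u hu => Submodule.smul_mem _ _ (Submodule.subset_span ?_)
    refine ⟨Φ u, ?_, rfl⟩
    have hdeg : u.degree = d := by
      rw [Finsupp.degree_eq_weight_one]
      exact hf (mem_support_iff.mp hu)
    exact phi_mem hdeg
  · rw [Submodule.span_le]
    rintro _ ⟨v, hv, rfl⟩
    obtain ⟨p, hp, rfl⟩ := Finset.mem_image.mp hv
    refine ⟨monomial (mpre d p) 1, ?_, ?_⟩
    · rw [SetLike.mem_coe, mem_homogeneousSubmodule]
      exact isHomogeneous_monomial _ (mpre_deg hp)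
    · show ψ _ = _
      rw [psi_monomial, phi_mpre hp]

lemma li_T (d : ℕ) : LinearIndependent ℂ
    (fun v : (Tset d : Finset (Fin 6 →₀ ℕ)) => (monomial v.1 (1:ℂ) : R)) := by
  have heq : (fun v : (Tset d : Finset (Fin 6 →₀ ℕ)) => (monomial v.1 (1:ℂ) : R))
      = (basisMonomials (Fin 6) ℂ) ∘ (Subtype.val) := by
    funext i; simp [coe_basisMonomials]
  rw [heq]
  exact (basisMonomials (Fin 6) ℂ).linearIndependent.comp _ Subtype.val_injective

lemma finrank_Md (d : ℕ) :
    Module.finrank ℂ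
      ↥(Submodule.map ψ.toLinearMap (homogeneousSubmodule (Fin 6) ℂ d)) = (Tset d).card := by
  rw [Md_eq]
  have himg : ((fun v => (monomial v (1:ℂ) : R)) '' (Tset d : Set (Fin 6 →₀ ℕ)))
      = Set.range (fun v : (Tset d : Finset (Fin 6 →₀ ℕ)) => (monomial v.1 (1:ℂ) : R)) := by
    ext x
    simp [Set.mem_image, Set.mem_range]
  rw [himg, finrank_span_eq_card (li_T d), Fintype.card_coe]

lemma card_Tset (d : ℕ) : (Tset d).card = (Dset d).card := by
  rw [Tset]
  refine Finset.card_image_of_injOn ?_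
  rintro ⟨a, b, c⟩ _ ⟨a', b', c'⟩ _ h
  have h0 : gv d (a,b,c) 0 = gv d (a',b',c') 0 := by rw [h]
  have h2 : gv d (a,b,c) 2 = gv d (a',b',c') 2 := by rw [h]
  have h4 : gv d (a,b,c) 4 = gv d (a',b',c') 4 := by rw [h]
  rw [gv0, gv0] at h0
  rw [gv2, gv2] at h2
  rw [gv4, gv4] at h4
  simp_all

lemma Dset_prod (d : ℕ) : Dset d = (Finset.range (d+1)) ×ˢ Eset d := by
  ext ⟨a, b, c⟩
  simp [Dset, Eset, Finset.mem_filter, Finset.mem_product]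
  tauto

lemma card_Dset (d : ℕ) : (Dset d).card = (d+1) * (Eset d).card := by
  rw [Dset_prod, Finset.card_product, Finset.card_range]

lemma Eset_biUnion (d : ℕ) :
    Eset d = (Finset.range (d+1)).biUnion (fun k => Finset.HasAntidiagonal.antidiagonal k) := by
  ext ⟨b, c⟩
  simp [Eset, Finset.mem_filter, Finset.mem_product, Finset.HasAntidiagonal.mem_antidiagonal]
  omega

lemma twice_sum (n : ℕ) : 2 * ∑ k ∈ Finset.range n, (k+1) = n * (n+1) := by
  induction n with
  | zero => simp
  | succ n ih => rw [Finset.sum_range_succ, Nat.mul_add, ih]; ring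

lemma card_Eset (d : ℕ) : 2 * (Eset d).card = (d+1) * (d+2) := by
  rw [Eset_biUnion, Finset.card_biUnion (by
    intro x _ y _ hxy
    rw [Function.onFun, Finset.disjoint_left]
    rintro ⟨b, c⟩ hb hc
    rw [Finset.HasAntidiagonal.mem_antidiagonal] at hb hc
    exact hxy (hb ▸ hc.symm ▸ rfl))]
  have h1 : ∑ k ∈ Finset.range (d+1), (Finset.HasAntidiagonal.antidiagonal k).card
      = ∑ k ∈ Finset.range (d+1), (k+1) := by
    refine Finset.sum_congr rfl fun k _ => Finset.Nat.card_antidiagonal k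
  rw [h1]
  exact twice_sum (d+1)

lemma part_ii (d : ℕ) :
    2 * Module.finrank ℂ
        ↥(Submodule.map ψ.toLinearMap (MvPolynomial.homogeneousSubmodule (Fin 6) ℂ d)) =
      (d + 1) ^ 2 * (d + 2) := by
  rw [finrank_Md, card_Tset, card_Dset]
  have h := card_Eset d
  calc 2 * ((d+1) * (Eset d).card) = (d+1) * (2 * (Eset d).card) := by ring
  _ = (d+1) * ((d+1) * (d+2)) := by rw [h]
  _ = (d+1)^2 * (d+2) := by ring

end Scroll

theorem scroll_closure_of_zeta :
    -- (i) ideal of the closure of the image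
    RingHom.ker ψ.toRingHom =
      Ideal.span {(X 0 : MvPolynomial (Fin 6) ℂ) * X 5 - X 1 * X 4,
        (X 2 : MvPolynomial (Fin 6) ℂ) * X 5 - X 3 * X 4,
        (X 1 : MvPolynomial (Fin 6) ℂ) * X 2 - X 0 * X 3} ∧
    -- (ii) Y is a threefold of degree 3 = 1 + codim in ℙ⁵: Hilbert function
    (∀ d : ℕ,
      2 * Module.finrank ℂ
        ↥(Submodule.map ψ.toLinearMap (MvPolynomial.homogeneousSubmodule (Fin 6) ℂ d)) =
      (d + 1) ^ 2 * (d + 2)) ∧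
    -- (iii) ζ is birational onto Y
    (∃ (A B C' : Fin 2 → MvPolynomial (Fin 6) ℂ) (dA dB dC : ℕ),
      (∀ k, (A k).IsHomogeneous dA) ∧ (∀ k, (B k).IsHomogeneous dB) ∧
      (∀ k, (C' k).IsHomogeneous dC) ∧
      ∃ s t u : R, s ≠ 0 ∧ t ≠ 0 ∧ u ≠ 0 ∧
        aeval ζ (A 0) = x0 * s ∧ aeval ζ (A 1) = x1 * s ∧
        aeval ζ (B 0) = y0 * t ∧ aeval ζ (B 1) = y1 * t ∧
        aeval ζ (C' 0) = z0 * u ∧ aeval ζ (C' 1) = z1 * u) := by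
  refine ⟨Scroll.part_i, Scroll.part_ii, ?_⟩
  refine ⟨![X 0, X 1], ![X 0, X 2], ![X 4, X 2], 1, 1, 1, ?_, ?_, ?_,
    y0 * z1, x0 * z1, x0 * y1, ?_, ?_, ?_, ?_, ?_, ?_, ?_, ?_, ?_⟩
  · intro k; fin_cases k <;> exact isHomogeneous_X _ _
  · intro k; fin_cases k <;> exact isHomogeneous_X _ _
  · intro k; fin_cases k <;> exact isHomogeneous_X _ _
  · rw [y0, z1]; exact mul_ne_zero (X_ne_zero _) (X_ne_zero _)
  · rw [x0, z1]; exact mul_ne_zero (X_ne_zero _) (X_ne_zero _)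
  · rw [x0, y1]; exact mul_ne_zero (X_ne_zero _) (X_ne_zero _)
  · show aeval ζ (X 0) = _
    rw [aeval_X]; show x0 * y0 * z1 = _; ring
  · show aeval ζ (X 1) = _
    rw [aeval_X]; show x1 * y0 * z1 = _; ring
  · show aeval ζ (X 0) = _
    rw [aeval_X]; show x0 * y0 * z1 = _; ring
  · show aeval ζ (X 2) = _
    rw [aeval_X]; show x0 * y1 * z1 = _; ring
  · show aeval ζ (X 4) = _
    rw [aeval_X]; show x0 * y1 * z0 = _; ring
  · show aeval ζ (X 2) = _
    rw [aeval_X]; show x0 * y1 * z1 = _; ring
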